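/- Let a, φ : ℝ³ → ℝ³ be C² (respectively continuous suffices for φ together with C¹ regularity), 2π-periodic in each coordinate, and divergence-free (Σⱼ ∂ⱼaⱼ = 0 and Σⱼ ∂ⱼφⱼ = 0), and let q : ℝ³ → ℝ be C² and 2π-periodic in each coordinate. Set v := a + ∇q. Then ∫_Q [ (a·∇)v + (∇a)ᵀv ]·φ dx = ∫_Q [ (a·∇)a ]·φ dx, where Q = [0,2π]³. -/

import Mathlib

/-!
With `v = a + ∇q`, the symmetry of the Hessian of `q` gives
`(a·∇)v + (∇a)ᵀv = (a·∇)a + ∇G` for `G = a·∇q + |a|²/2`. Against a divergence-free `φ`,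
`∇G·φ = div (G φ)`, and the integral of a divergence over the period cell vanishes because the
boundary terms of opposite faces cancel by periodicity.
-/

open Set Real MeasureTheory

noncomputable def pd (i : Fin 3) (f : (Fin 3 → ℝ) → ℝ) (x : Fin 3 → ℝ) : ℝ :=
  fderiv ℝ f x (Pi.single i 1)

theorem integral_divergence_eq_zero_of_periodic {n : ℕ} {a b : Fin (n + 1) → ℝ} (hab : a ≤ b)
    {F : (Fin (n + 1) → ℝ) → Fin (n + 1) → ℝ} (hF : ContDiff ℝ 1 F)
    (hper : ∀ x i, F (x + Pi.single i (b i - a i)) = F x) :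
    ∫ x in Icc a b, ∑ i, fderiv ℝ F x (Pi.single i 1) i = 0 := by
  have hFd : Differentiable ℝ F := hF.differentiable one_ne_zero
  have hdiv_cont : Continuous fun x => ∑ i, fderiv ℝ F x (Pi.single i 1) i :=
    continuous_finsetSum _ fun i _ =>
      (continuous_apply i).comp ((hF.continuous_fderiv one_ne_zero).clm_apply continuous_const)
  rw [integral_divergence_of_hasFDerivAt_off_countable (a := a) (b := b) hab F (fderiv ℝ F) ∅
    countable_empty hF.continuous.continuousOn (fun x _ => (hFd x).hasFDerivAt)
    (hdiv_cont.continuousOn.integrableOn_compact isCompact_Icc)]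
  refine Finset.sum_eq_zero fun i _ => ?_
  have front_eq_back : ∀ y : Fin n → ℝ,
      Fin.insertNth i (b i) y =
        Fin.insertNth i (a i) y + (Pi.single i (b i - a i) : Fin (n + 1) → ℝ) := by
    intro y
    ext j
    induction j using Fin.succAboveCases i <;> simp
  simp only [front_eq_back, hper, sub_self]

section PartialDerivatives

variable {f g : (Fin 3 → ℝ) → ℝ} {x : Fin 3 → ℝ}

theorem pd_eq_fderiv_apply {F : (Fin 3 → ℝ) → Fin 3 → ℝ}
    (hF : DifferentiableAt ℝ F x) (i j : Fin 3) :
    pd i (fun y => F y j) x = fderiv ℝ F x (Pi.single i 1) j := by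
  rw [pd, fderiv_apply hF]
  rfl

theorem pd_add (hf : DifferentiableAt ℝ f x) (hg : DifferentiableAt ℝ g x) (i : Fin 3) :
    pd i (fun y => f y + g y) x = pd i f x + pd i g x := by
  simp [pd, fderiv_fun_add hf hg]

theorem pd_mul (hf : DifferentiableAt ℝ f x) (hg : DifferentiableAt ℝ g x) (i : Fin 3) :
    pd i (fun y => f y * g y) x = pd i f x * g x + f x * pd i g x := by
  simp only [pd, fderiv_fun_mul hf hg, add_apply, smul_apply, smul_eq_mul]
  ring

theorem pd_div_const (hf : DifferentiableAt ℝ f x) (c : ℝ) (i : Fin 3) :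
    pd i (fun y => f y / c) x = pd i f x / c := by
  simp [pd, div_eq_mul_inv, fderiv_mul_const hf, mul_comm]

theorem pd_sum {ι : Type*} {s : Finset ι} {F : ι → (Fin 3 → ℝ) → ℝ}
    (hF : ∀ j ∈ s, DifferentiableAt ℝ (F j) x) (i : Fin 3) :
    pd i (fun y => ∑ j ∈ s, F j y) x = ∑ j ∈ s, pd i (F j) x := by
  simp [pd, fderiv_fun_sum hF]

theorem pd_add_period {c : Fin 3 → ℝ} (hper : ∀ y, f (y + c) = f y) (i : Fin 3) :
    pd i f (x + c) = pd i f x := by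
  rw [pd, pd, ← fderiv_comp_add_right, funext hper]

theorem contDiff_pd {n : ℕ} (hf : ContDiff ℝ (n + 1) f) (i : Fin 3) : ContDiff ℝ n (pd i f) :=
  (hf.fderiv_right le_rfl).clm_apply contDiff_const

theorem continuous_pd (hf : ContDiff ℝ 1 f) (i : Fin 3) : Continuous (pd i f) :=
  (hf.continuous_fderiv one_ne_zero).clm_apply continuous_const

theorem pd_pd_comm (hf : ContDiff ℝ 2 f) (i j : Fin 3) :
    pd i (pd j f) x = pd j (pd i f) x := by
  have hdf : Differentiable ℝ (fderiv ℝ f) :=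
    (hf.fderiv_right one_add_one_eq_two.le).differentiable one_ne_zero
  have pd_pd_eq : ∀ k l : Fin 3,
      pd k (pd l f) x = fderiv ℝ (fderiv ℝ f) x (Pi.single k 1) (Pi.single l 1) := fun k l => by
    rw [pd, show pd l f = fun y => fderiv ℝ f y (Pi.single l 1) from rfl,
      fderiv_clm_apply (hdf x) (differentiableAt_const _)]
    simp
  rw [pd_pd_eq, pd_pd_eq, hf.contDiffAt.isSymmSndFDerivAt (by simp)]

end PartialDerivatives

theorem integral_sum_pd_eq_zero_of_periodic {F : (Fin 3 → ℝ) → Fin 3 → ℝ} (hF : ContDiff ℝ 1 F)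
    (hper : ∀ x j, F (x + Pi.single j (2 * π)) = F x) :
    ∫ x in univ.pi fun _ : Fin 3 => Icc (0 : ℝ) (2 * π), ∑ i, pd i (fun y => F y i) x = 0 := by
  have hFd : Differentiable ℝ F := hF.differentiable one_ne_zero
  simp only [pd_eq_fderiv_apply (hFd _), pi_univ_Icc]
  exact integral_divergence_eq_zero_of_periodic (fun _ => by positivity) hF
    (fun x i => by simpa using hper x i)

theorem integral_sum_pd_mul_eq_zero_of_divergence_free {G : (Fin 3 → ℝ) → ℝ}
    {φ : (Fin 3 → ℝ) → Fin 3 → ℝ} (hG : ContDiff ℝ 1 G) (hφ : ContDiff ℝ 1 φ)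
    (hG_per : ∀ x j, G (x + Pi.single j (2 * π)) = G x)
    (hφ_per : ∀ x j, φ (x + Pi.single j (2 * π)) = φ x)
    (hφ_div : ∀ x, ∑ j, pd j (fun y => φ y j) x = 0) :
    ∫ x in univ.pi fun _ : Fin 3 => Icc (0 : ℝ) (2 * π), ∑ i, pd i G x * φ x i = 0 := by
  have hφi (i : Fin 3) : ContDiff ℝ 1 fun y => φ y i := contDiff_pi.1 hφ i
  have div_mul_eq (x : Fin 3 → ℝ) :
      ∑ i, pd i (fun y => G y * φ y i) x = ∑ i, pd i G x * φ x i := by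
    simp only [pd_mul (hG.differentiable one_ne_zero x)
      ((hφi _).differentiable one_ne_zero x), Finset.sum_add_distrib, ← Finset.mul_sum,
      hφ_div x, mul_zero, add_zero]
  simp only [← div_mul_eq]
  exact integral_sum_pd_eq_zero_of_periodic (F := fun y i => G y * φ y i)
    (contDiff_pi.2 fun i => hG.mul (hφi i))
    (fun x j => by simp only [hG_per, hφ_per])

noncomputable def convectivePotential (a : (Fin 3 → ℝ) → Fin 3 → ℝ) (q : (Fin 3 → ℝ) → ℝ)
    (x : Fin 3 → ℝ) : ℝ :=
  ∑ j, (a x j * pd j q x + a x j * a x j / 2)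

section ConvectivePotential

variable {a : (Fin 3 → ℝ) → Fin 3 → ℝ} {q : (Fin 3 → ℝ) → ℝ}

theorem contDiff_convectivePotential (ha : ContDiff ℝ 1 a) (hq : ContDiff ℝ 2 q) :
    ContDiff ℝ 1 (convectivePotential a q) := by
  have haj (j : Fin 3) : ContDiff ℝ 1 fun y => a y j := contDiff_pi.1 ha j
  exact ContDiff.sum fun j _ =>
    ((haj j).mul (contDiff_pd hq j)).add (((haj j).mul (haj j)).div_const 2)

theorem convectivePotential_add_period {c : Fin 3 → ℝ} (ha_per : ∀ x, a (x + c) = a x)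
    (hq_per : ∀ x, q (x + c) = q x) (x : Fin 3 → ℝ) :
    convectivePotential a q (x + c) = convectivePotential a q x := by
  simp only [convectivePotential, ha_per, pd_add_period hq_per]

theorem pd_convectivePotential (ha : ContDiff ℝ 1 a) (hq : ContDiff ℝ 2 q) (i : Fin 3)
    (x : Fin 3 → ℝ) :
    pd i (convectivePotential a q) x =
      ∑ j, (a x j * pd j (pd i q) x + pd i (fun y => a y j) x * (a x j + pd j q x)) := by
  have haj (j : Fin 3) : DifferentiableAt ℝ (fun y => a y j) x :=
    ((contDiff_pi.1 ha j).differentiable one_ne_zero) x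
  have hqj (j : Fin 3) : DifferentiableAt ℝ (pd j q) x :=
    ((contDiff_pd hq j).differentiable one_ne_zero) x
  have hsq (j : Fin 3) : DifferentiableAt ℝ (fun y => a y j * a y j) x := by fun_prop
  have hprod (j : Fin 3) : DifferentiableAt ℝ (fun y => a y j * pd j q y) x := by fun_prop
  have hhalf (j : Fin 3) : DifferentiableAt ℝ (fun y => a y j * a y j / 2) x := by fun_prop
  unfold convectivePotential
  rw [pd_sum fun j _ => (hprod j).fun_add (hhalf j)]
  refine Finset.sum_congr rfl fun j _ => ?_
  rw [pd_add (hprod j) (hhalf j), pd_mul (haj j) (hqj j), pd_div_const (hsq j),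
    pd_mul (haj j) (haj j), pd_pd_comm hq]
  ring

theorem convective_add_transpose_eq {v : (Fin 3 → ℝ) → Fin 3 → ℝ} (ha : ContDiff ℝ 1 a)
    (hq : ContDiff ℝ 2 q) (hv : ∀ x i, v x i = a x i + pd i q x) (x : Fin 3 → ℝ) (i : Fin 3) :
    ∑ j, a x j * pd j (fun y => v y i) x + ∑ j, pd i (fun y => a y j) x * v x j =
      ∑ j, a x j * pd j (fun y => a y i) x + pd i (convectivePotential a q) x := by
  have hvi : (fun y => v y i) = fun y => a y i + pd i q y := funext fun y => hv y i
  have pd_vi (j : Fin 3) :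
      pd j (fun y => v y i) x = pd j (fun y => a y i) x + pd j (pd i q) x := by
    rw [hvi]
    exact pd_add (((contDiff_pi.1 ha i).differentiable one_ne_zero) x)
      (((contDiff_pd hq i).differentiable one_ne_zero) x) j
  simp only [pd_vi]
  simp only [hv, pd_convectivePotential ha hq, mul_add, Finset.sum_add_distrib]
  ring

end ConvectivePotential

theorem gradient_part_annihilated_general
    (a φ : (Fin 3 → ℝ) → Fin 3 → ℝ) (q : (Fin 3 → ℝ) → ℝ)
    (v : (Fin 3 → ℝ) → Fin 3 → ℝ)
    -- regularity
    (ha : ContDiff ℝ 2 a) (hφ : ContDiff ℝ 1 φ) (hq : ContDiff ℝ 2 q)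
    -- 2π-periodicity in each coordinate
    (ha_per : ∀ x, ∀ j : Fin 3, a (x + Pi.single j (2 * Real.pi)) = a x)
    (hφ_per : ∀ x, ∀ j : Fin 3, φ (x + Pi.single j (2 * Real.pi)) = φ x)
    (hq_per : ∀ x, ∀ j : Fin 3, q (x + Pi.single j (2 * Real.pi)) = q x)
    -- divergence-free conditions
    (hφ_div : ∀ x, ∑ j : Fin 3, pd j (fun y => φ y j) x = 0)
    -- definition `v := a + ∇q`
    (hv : ∀ x i, v x i = a x i + pd i q x) :
    (∫ x in Set.univ.pi fun _ : Fin 3 => Set.Icc (0 : ℝ) (2 * Real.pi),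
        ∑ i : Fin 3,
          ((∑ j : Fin 3, a x j * pd j (fun y => v y i) x)
            + ∑ j : Fin 3, pd i (fun y => a y j) x * v x j) * φ x i)
      = ∫ x in Set.univ.pi fun _ : Fin 3 => Set.Icc (0 : ℝ) (2 * Real.pi),
          ∑ i : Fin 3, (∑ j : Fin 3, a x j * pd j (fun y => a y i) x) * φ x i := by
  have ha1 : ContDiff ℝ 1 a := ha.of_le one_le_two
  have hG := contDiff_convectivePotential ha1 hq
  have hQ : IsCompact (univ.pi fun _ : Fin 3 => Icc (0 : ℝ) (2 * π)) :=
    isCompact_univ_pi fun _ => isCompact_Icc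
  have hconv_cont : Continuous fun x =>
      ∑ i, (∑ j, a x j * pd j (fun y => a y i) x) * φ x i := by
    have hpd_a (i j : Fin 3) := continuous_pd (contDiff_pi.1 ha1 i) j
    have ha_cont := ha.continuous
    have hφ_cont := hφ.continuous
    fun_prop
  have hgrad_cont : Continuous fun x => ∑ i, pd i (convectivePotential a q) x * φ x i := by
    have hpd_G := continuous_pd hG
    have hφ_cont := hφ.continuous
    fun_prop
  simp only [convective_add_transpose_eq ha1 hq hv, add_mul, Finset.sum_add_distrib]
  rw [integral_add (hconv_cont.continuousOn.integrableOn_compact hQ)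
      (hgrad_cont.continuousOn.integrableOn_compact hQ),
    integral_sum_pd_mul_eq_zero_of_divergence_free hG hφ
      (fun x j => convectivePotential_add_period (ha_per · j) (hq_per · j) x) hφ_per hφ_div,
    add_zero]

/-- The key identity (2.10): for periodic divergence-free `a` and `φ`, a
periodic C² scalar `q`, and `v := a + ∇q`, the gradient part of the nonlinear
term is annihilated when tested against the divergence-free `φ`:
`∫_Q [(a·∇)v + (∇a)ᵀv]·φ = ∫_Q [(a·∇)a]·φ`. -/
theorem gradient_part_annihilated
    (a φ : (Fin 3 → ℝ) → Fin 3 → ℝ) (q : (Fin 3 → ℝ) → ℝ)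
    (v : (Fin 3 → ℝ) → Fin 3 → ℝ)
    -- regularity
    (ha : ContDiff ℝ 2 a) (hφ : ContDiff ℝ 1 φ) (hq : ContDiff ℝ 2 q)
    -- 2π-periodicity in each coordinate
    (ha_per : ∀ x, ∀ j : Fin 3, a (x + Pi.single j (2 * Real.pi)) = a x)
    (hφ_per : ∀ x, ∀ j : Fin 3, φ (x + Pi.single j (2 * Real.pi)) = φ x)
    (hq_per : ∀ x, ∀ j : Fin 3, q (x + Pi.single j (2 * Real.pi)) = q x)
    -- divergence-free conditions
    (ha_div : ∀ x, ∑ j : Fin 3, pd j (fun y => a y j) x = 0)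
    (hφ_div : ∀ x, ∑ j : Fin 3, pd j (fun y => φ y j) x = 0)
    -- definition `v := a + ∇q`
    (hv : ∀ x i, v x i = a x i + pd i q x) :
    (∫ x in Set.univ.pi fun _ : Fin 3 => Set.Icc (0 : ℝ) (2 * Real.pi),
        ∑ i : Fin 3,
          ((∑ j : Fin 3, a x j * pd j (fun y => v y i) x)
            + ∑ j : Fin 3, pd i (fun y => a y j) x * v x j) * φ x i)
      = ∫ x in Set.univ.pi fun _ : Fin 3 => Set.Icc (0 : ℝ) (2 * Real.pi),
          ∑ i : Fin 3, (∑ j : Fin 3, a x j * pd j (fun y => a y i) x) * φ x i :=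
  gradient_part_annihilated_general a φ q v ha hφ hq ha_per hφ_per hq_per hφ_div hv
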